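/- arXiv:2511.16129 — 4 statements merged into one kernel-verified Lean document; each statement's English description precedes it below -/
import Mathlib

section
/- Let N = 1 and m > 1, and assume (H1). Then the equation admits at most one radial solution: if u₁ is a radial solution on [0,R₁) and u₂ is a radial solution on [0,R₂), then R₁ = R₂ and u₁ = u₂. Moreover, for any radial solution u, the value α = u(0) is the unique number in (b,∞) with F(α) = 0. -/
open Filter Set MeasureTheory intervalIntegral

noncomputable section

/-- The half-open interval `[0, R)` inside `ℝ`, where `R : EReal` may be `∞`. -/
def domR (R : EReal) : Set ℝ := {r : ℝ | 0 ≤ r ∧ (r : EReal) < R}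

/-- The filter describing `r → R⁻` inside `ℝ` (it equals `atTop` when `R = ∞`). -/
def limR (R : EReal) : Filter ℝ := Filter.comap Real.toEReal (nhdsWithin R (Set.Iio R))

/-- Assumption (H1): `f` is continuous on `(0,∞)`, nonpositive on `(0,b]` and
positive on `(b,∞)`, with `b > 0`. -/
def H1cond (b : ℝ) (f : ℝ → ℝ) : Prop :=
  0 < b ∧ ContinuousOn f (Set.Ioi 0) ∧
    (∀ u : ℝ, 0 < u → u ≤ b → f u ≤ 0) ∧ (∀ u : ℝ, b < u → 0 < f u)

/-- `u` (with derivative `u'`) is a radial solution on `[0, R)` of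
`(r^{N-1} |u'|^{m-2} u')' = - r^{N-1} f(u)`, positive, `C¹` up to the origin,
with `u'(0) = 0` and `u, u' → 0` as `r → R`. -/
def IsRadialSolution (N : ℕ) (m : ℝ) (f : ℝ → ℝ) (R : EReal) (u u' : ℝ → ℝ) : Prop :=
  0 < R ∧
  (∀ r ∈ domR R, HasDerivWithinAt u (u' r) (domR R) r) ∧
  ContinuousOn u' (domR R) ∧
  (∀ r ∈ domR R, 0 < u r) ∧
  u' 0 = 0 ∧
  (∀ r : ℝ, 0 < r → (r : EReal) < R →
    HasDerivAt (fun s : ℝ => s ^ (N - 1) * |u' s| ^ (m - 2) * u' s)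
      (-(r ^ (N - 1) * f (u r))) r) ∧
  Filter.Tendsto u (limR R) (nhds 0) ∧
  Filter.Tendsto u' (limR R) (nhds 0)

/-- `rr` is the (strictly decreasing) inverse on `(0, α)` of a radial solution `u`,
with derivatives `rr'`, `rr''`, satisfying the transformed ODE
`(m-1) r'' = (N-1) r'²/r + f(u) |r'|^m r'`. -/
def IsInvSol (N : ℕ) (m α : ℝ) (f : ℝ → ℝ) (R : EReal) (u rr rr' rr'' : ℝ → ℝ) : Prop :=
  (∀ v ∈ Set.Ioo 0 α,
    0 < rr v ∧ (rr v : EReal) < R ∧ u (rr v) = v ∧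
    HasDerivAt rr (rr' v) v ∧ rr' v < 0 ∧ HasDerivAt rr' (rr'' v) v ∧
    (m - 1) * rr'' v = ((N : ℝ) - 1) * (rr' v) ^ 2 / rr v + f v * |rr' v| ^ m * rr' v) ∧
  (∀ x : ℝ, 0 < x → (x : EReal) < R → ∃ v ∈ Set.Ioo 0 α, rr v = x)

/-- The function `ω(u) = r(u)^{N-1} / (r'(u) |r'(u)|^{m-2})`. -/
def omegaF (N : ℕ) (m : ℝ) (rr rr' : ℝ → ℝ) (v : ℝ) : ℝ :=
  rr v ^ (N - 1) / (rr' v * |rr' v| ^ (m - 2))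

/-- The function `P(u) = a u ω(u) + r(u)^N ((m-1)/m · 1/|r'(u)|^m + (a/N) u f(u))`. -/
def PF (N : ℕ) (m a : ℝ) (f rr rr' : ℝ → ℝ) (v : ℝ) : ℝ :=
  a * v * omegaF N m rr rr' v +
    rr v ^ N * ((m - 1) / m * (1 / |rr' v| ^ m) + a / (N : ℝ) * v * f v)

/-!
Everything rests on the first integral `(m-1)/m |u'|^m + Φ(u) = Φ(α)`, `Φ(v) = ∫_b^v f`,
`α = u(0)`. Since `u, u' → 0` at `R`, `Φ(v) → Φ(α)` as `v → 0⁺`; as `f ≤ 0` near `0`, this makes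
`f` integrable there with `F(α) = 0`, and `F = Φ - Φ(α)` is strictly increasing on `[b, ∞)`.
A solution cannot stall while it still has to decrease to `0`, which forces `Φ < Φ(α)` on
`(0, α)`; hence `u < α` and `u' < 0` on `(0, R)`, so `u' = -h(u)` with
`h = (m/(m-1) (Φ(α) - Φ))^{1/m}` depending on `α` only. Separating variables, `Ψ(u(r)) + r` is
constant for `Ψ' = 1/h`, and the constant is `lim_{v → α⁻} Ψ(v)`. So two solutions with the same
`α` coincide on their common interval, and neither interval can be longer than the other since
`u(r) → 0` at its end.
-/

open Topology

theorem eq_of_hasDerivAt_zero {g : ℝ → ℝ} {a c : ℝ} (hac : a ≤ c)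
    (hg : ContinuousOn g (Icc a c)) (hd : ∀ x ∈ Ioo a c, HasDerivAt g 0 x) : g c = g a := by
  rcases hac.eq_or_lt with rfl | hlt
  · rfl
  obtain ⟨_, _, hslope⟩ := exists_hasDerivAt_eq_slope g (fun _ => 0) hlt hg hd
  rw [eq_comm, div_eq_zero_iff, sub_eq_zero] at hslope
  exact hslope.resolve_right (sub_ne_zero.2 hlt.ne')

/-- `min u (u a)` has zero derivative on `(a, c)`, hence is constant. -/
theorem le_of_hasDerivAt_eq_zero_of_lt {u u' : ℝ → ℝ} {a c γ : ℝ} (hac : a ≤ c)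
    (hu : ContinuousOn u (Icc a c)) (hd : ∀ x ∈ Ioo a c, HasDerivAt u (u' x) x)
    (hflat : ∀ x ∈ Ioo a c, u x < γ → u' x = 0) (ha : u a < γ) : u a ≤ u c := by
  set k : ℝ → ℝ := fun x => min (u x) (u a)
  have hk : ∀ x ∈ Ioo a c, HasDerivAt k 0 x := by
    intro x hx
    by_cases hux : u x < γ
    · have hu0 : HasDerivAt u 0 x := hflat x hx hux ▸ hd x hx
      rw [hasDerivAt_iff_isLittleO] at hu0 ⊢
      simp only [smul_zero, sub_zero] at hu0 ⊢
      refine (Asymptotics.isBigO_of_le _ fun y => ?_).trans_isLittleO hu0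
      simpa using abs_min_sub_min_le_max (u y) (u a) (u x) (u a)
    · have hev : ∀ᶠ y in 𝓝 x, u a < u y :=
        (hd x hx).continuousAt.eventually_const_lt (by linarith [not_lt.1 hux])
      refine (hasDerivAt_const x (u a)).congr_of_eventuallyEq ?_
      filter_upwards [hev] with y hy
      exact min_eq_right hy.le
  have hkc := eq_of_hasDerivAt_zero hac (hu.inf continuousOn_const) hk
  simpa [k] using hkc

theorem hasDerivAt_integral_of_continuousOn_Ioi {f : ℝ → ℝ} {a b x : ℝ}
    (hf : ContinuousOn f (Ioi a)) (hb : a < b) (hx : a < x) :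
    HasDerivAt (fun y => ∫ t in b..y, f t) (f x) x :=
  integral_hasDerivAt_right
    ((hf.mono fun _ ht => lt_of_lt_of_le (lt_min hb hx) ht.1).intervalIntegrable)
    (hf.stronglyMeasurableAtFilter isOpen_Ioi x hx) (hf.continuousAt (Ioi_mem_nhds hx))

/-- Extended by `L` at `a`, `x ↦ ∫_b^x f` is a continuous primitive of `f` on `[a, b]`, and a
derivative of constant sign is integrable. -/
theorem integral_eq_neg_of_tendsto_nhdsGT {f : ℝ → ℝ} {a b L : ℝ} (hab : a < b)
    (hf : ContinuousOn f (Ioi a)) (hnonpos : ∀ x ∈ Ioo a b, f x ≤ 0)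
    (hlim : Tendsto (fun x => ∫ t in b..x, f t) (𝓝[>] a) (𝓝 L)) :
    IntervalIntegrable f volume a b ∧ ∫ t in a..b, f t = -L := by
  set G := Function.update (fun x => ∫ t in b..x, f t) a L
  have hG : ∀ x, a < x → HasDerivAt G (f x) x := fun x hx =>
    (hasDerivAt_integral_of_continuousOn_Ioi hf hab hx).congr_of_eventuallyEq
      (by filter_upwards [eventually_ne_nhds hx.ne'] with y hy using Function.update_of_ne hy ..)
  have hcont : ContinuousOn G (Icc a b) := by
    intro x hx
    rcases hx.1.eq_or_lt with rfl | hax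
    · exact continuousWithinAt_update_same.2
        (hlim.mono_left (nhdsWithin_mono _ fun y hy => lt_of_le_of_ne hy.1.1 (Ne.symm hy.2)))
    · exact (hG x hax).continuousAt.continuousWithinAt
  have hint : IntervalIntegrable f volume a b := by
    rw [intervalIntegrable_iff_integrableOn_Ioc_of_le hab.le]
    simpa using (integrableOn_deriv_of_nonneg hcont.neg (fun x hx => (hG x hx.1).neg)
      fun x hx => neg_nonneg.2 (hnonpos x hx)).neg
  refine ⟨hint, ?_⟩
  rw [integral_eq_sub_of_hasDerivAt_of_le hab.le hcont (fun x hx => hG x hx.1) hint]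
  simp [G, hab.ne']

section SignedPower

variable {m : ℝ}

theorem abs_abs_rpow_sub_two_mul (hm : 1 < m) (x : ℝ) :
    |(|x| ^ (m - 2) * x)| = |x| ^ (m - 1) := by
  rcases eq_or_ne x 0 with rfl | hx
  · simp [Real.zero_rpow (by linarith : m - 1 ≠ 0)]
  · rw [abs_mul, abs_of_nonneg (by positivity), ← Real.rpow_add_one (abs_ne_zero.2 hx)]
    ring_nf

/-- Although `w` itself need not be differentiable, `(m-1)/m |w|^m` is a function of
`|w|^{m-2} w` whose derivative is the inverse map `y ↦ |y|^{q-2} y`, `q = m/(m-1)`. -/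
theorem HasDerivAt.abs_rpow_of_signedPow {w : ℝ → ℝ} {d r : ℝ} (hm : 1 < m)
    (hw : HasDerivAt (fun s => |w s| ^ (m - 2) * w s) d r) :
    HasDerivAt (fun s => (m - 1) / m * |w s| ^ m) (w r * d) r := by
  have hm1 : m - 1 ≠ 0 := by linarith
  set q := m / (m - 1)
  have hq : 1 < q := by rw [lt_div_iff₀ (by linarith)]; linarith
  have hmq : (m - 1) * q = m := mul_div_cancel₀ m hm1
  have hpow : ∀ x : ℝ, |(|x| ^ (m - 2) * x)| ^ q = |x| ^ m := fun x => by
    rw [abs_abs_rpow_sub_two_mul hm, ← Real.rpow_mul (abs_nonneg x), hmq]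
  have hinv : ∀ x : ℝ, |(|x| ^ (m - 2) * x)| ^ (q - 2) * (|x| ^ (m - 2) * x) = x := fun x => by
    rcases eq_or_ne x 0 with rfl | hx
    · simp
    rw [abs_abs_rpow_sub_two_mul hm, ← Real.rpow_mul (abs_nonneg x), ← mul_assoc,
      ← Real.rpow_add (abs_pos.2 hx)]
    have : (m - 1) * (q - 2) + (m - 2) = 0 := by linear_combination hmq
    rw [this, Real.rpow_zero, one_mul]
  have h := ((hasDerivAt_abs_rpow _ hq).comp r hw).const_mul ((m - 1) / m)
  simp only [Function.comp_def, hpow] at h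
  refine h.congr_deriv ?_
  have hqm : (m - 1) / m * q = 1 := by
    rw [div_mul_eq_mul_div, hmq, div_self (by linarith)]
  calc _ = (m - 1) / m * q *
        (|(|w r| ^ (m - 2) * w r)| ^ (q - 2) * (|w r| ^ (m - 2) * w r)) * d := by ring
    _ = w r * d := by rw [hqm, hinv, one_mul]

end SignedPower

/-- The primitive of `f` normalised at `b`: unlike `F`, it needs no integrability of `f`
at `0`. -/
def potential (b : ℝ) (f : ℝ → ℝ) (v : ℝ) : ℝ := ∫ τ in b..v, f τ

namespace H1cond

variable {b : ℝ} {f : ℝ → ℝ}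

theorem threshold_pos (hf : H1cond b f) : 0 < b := hf.1

theorem continuousOn (hf : H1cond b f) : ContinuousOn f (Ioi 0) := hf.2.1

theorem nonpos {v : ℝ} (hf : H1cond b f) (h0 : 0 < v) (hv : v ≤ b) : f v ≤ 0 := hf.2.2.1 v h0 hv

theorem pos {v : ℝ} (hf : H1cond b f) (hv : b < v) : 0 < f v := hf.2.2.2 v hv

theorem hasDerivAt_potential (hf : H1cond b f) {v : ℝ} (hv : 0 < v) :
    HasDerivAt (potential b f) (f v) v :=
  hasDerivAt_integral_of_continuousOn_Ioi hf.continuousOn hf.threshold_pos hv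

theorem continuousOn_potential (hf : H1cond b f) : ContinuousOn (potential b f) (Ioi 0) :=
  fun _ hv => (hf.hasDerivAt_potential hv).continuousAt.continuousWithinAt

theorem potential_antitoneOn (hf : H1cond b f) : AntitoneOn (potential b f) (Ioc 0 b) := by
  refine antitoneOn_of_deriv_nonpos (convex_Ioc 0 b)
    (hf.continuousOn_potential.mono Ioc_subset_Ioi_self) ?_ ?_ <;> rw [interior_Ioc]
  · exact fun v hv => (hf.hasDerivAt_potential hv.1).differentiableAt.differentiableWithinAt
  · intro v hv
    rw [(hf.hasDerivAt_potential hv.1).deriv]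
    exact hf.nonpos hv.1 hv.2.le

theorem potential_strictMonoOn (hf : H1cond b f) : StrictMonoOn (potential b f) (Ici b) := by
  refine strictMonoOn_of_deriv_pos (convex_Ici b)
    (hf.continuousOn_potential.mono fun v hv => lt_of_lt_of_le hf.threshold_pos hv) ?_
  rw [interior_Ici]
  intro v hv
  rw [(hf.hasDerivAt_potential (hf.threshold_pos.trans hv)).deriv]
  exact hf.pos hv

end H1cond

section Domain

variable {R : EReal}

theorem Icc_subset_domR {r : ℝ} (hr : r ∈ domR R) : Icc 0 r ⊆ domR R :=
  fun _ hs => ⟨hs.1, lt_of_le_of_lt (EReal.coe_le_coe_iff.2 hs.2) hr.2⟩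

theorem domR_mem_nhds {r : ℝ} (h0 : 0 < r) (hR : (r : EReal) < R) : domR R ∈ 𝓝 r := by
  obtain ⟨t, hrt, htR⟩ := EReal.exists_between_coe_real hR
  exact mem_of_superset (Ioo_mem_nhds h0 (EReal.coe_lt_coe_iff.1 hrt))
    fun s hs => ⟨hs.1.le, lt_trans (EReal.coe_lt_coe_iff.2 hs.2) htR⟩

theorem eventually_limR {c : ℝ} (hc : (c : EReal) < R) :
    ∀ᶠ r in limR R, c < r ∧ (r : EReal) < R := by
  have h : Ioi (c : EReal) ∩ Iio R ∈ 𝓝[<] R :=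
    inter_mem (mem_nhdsWithin_of_mem_nhds (isOpen_Ioi.mem_nhds hc)) self_mem_nhdsWithin
  exact mem_of_superset (preimage_mem_comap h) fun r hr => ⟨EReal.coe_lt_coe_iff.1 hr.1, hr.2⟩

theorem limR_neBot (hR : 0 < R) : (limR R).NeBot := by
  refine comap_neBot fun s hs => ?_
  obtain ⟨l, hl, hsub⟩ := (mem_nhdsLT_iff_exists_Ioo_subset' hR).1 hs
  obtain ⟨y, hy1, hy2⟩ := EReal.exists_between_coe_real hl
  exact ⟨y, hsub ⟨hy1, hy2⟩⟩

theorem limR_coe (ρ : ℝ) : limR (ρ : EReal) = 𝓝[<] ρ := by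
  rw [limR, nhdsWithin, comap_inf, comap_principal, ← EReal.isEmbedding_coe.nhds_eq_comap,
    nhdsWithin]
  congr 2
  ext x
  simp

end Domain

namespace IsRadialSolution

variable {m b : ℝ} {f : ℝ → ℝ} {R : EReal} {u u' : ℝ → ℝ}

section Basic

variable (hsol : IsRadialSolution 1 m f R u u')
include hsol

theorem zero_mem_domR : (0 : ℝ) ∈ domR R := ⟨le_rfl, by exact_mod_cast hsol.1⟩

theorem pos {r : ℝ} (hr : r ∈ domR R) : 0 < u r := hsol.2.2.2.1 r hr

theorem continuousOn_deriv : ContinuousOn u' (domR R) := hsol.2.2.1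

theorem deriv_zero : u' 0 = 0 := hsol.2.2.2.2.1

theorem continuousOn : ContinuousOn u (domR R) :=
  fun r hr => (hsol.2.1 r hr).continuousWithinAt

theorem hasDerivAt {r : ℝ} (h0 : 0 < r) (hR : (r : EReal) < R) : HasDerivAt u (u' r) r :=
  (hsol.2.1 r ⟨h0.le, hR⟩).hasDerivAt (domR_mem_nhds h0 hR)

theorem hasDerivAt_signedPow {r : ℝ} (h0 : 0 < r) (hR : (r : EReal) < R) :
    HasDerivAt (fun s => |u' s| ^ (m - 2) * u' s) (-f (u r)) r := by
  simpa using hsol.2.2.2.2.2.1 r h0 hR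

theorem tendsto_limR : Tendsto u (limR R) (𝓝 0) := hsol.2.2.2.2.2.2.1

theorem tendsto_deriv_limR : Tendsto u' (limR R) (𝓝 0) := hsol.2.2.2.2.2.2.2

theorem eventually_limR_pos : ∀ᶠ r : ℝ in limR R, 0 < r ∧ (r : EReal) < R :=
  eventually_limR (by exact_mod_cast hsol.1)

theorem exists_lt {γ : ℝ} (hγ : 0 < γ) : ∃ r : ℝ, 0 < r ∧ (r : EReal) < R ∧ u r < γ := by
  have := limR_neBot hsol.1
  obtain ⟨r, ⟨h0, hR⟩, hr⟩ :=
    (hsol.eventually_limR_pos.and (hsol.tendsto_limR.eventually_lt_const hγ)).exists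
  exact ⟨r, h0, hR, hr⟩

/-- Otherwise `u` could not decrease below its value at a point where `u < γ`, although
`u → 0`. -/
theorem exists_deriv_ne_zero {γ : ℝ} (hγ : 0 < γ) :
    ∃ r ∈ domR R, u r < γ ∧ u' r ≠ 0 := by
  by_contra! hflat
  obtain ⟨r₁, hr₁0, hr₁R, hur₁⟩ := hsol.exists_lt hγ
  have := limR_neBot hsol.1
  obtain ⟨r₂, ⟨hr₁₂, hr₂R⟩, hur₂⟩ := ((eventually_limR hr₁R).and
    (hsol.tendsto_limR.eventually_lt_const (hsol.pos ⟨hr₁0.le, hr₁R⟩))).exists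
  have hsub : Icc r₁ r₂ ⊆ domR R :=
    (Icc_subset_Icc_left hr₁0.le).trans (Icc_subset_domR ⟨hr₁0.le.trans hr₁₂.le, hr₂R⟩)
  have := le_of_hasDerivAt_eq_zero_of_lt hr₁₂.le (hsol.continuousOn.mono hsub)
    (fun x hx => hsol.hasDerivAt (hr₁0.trans hx.1) (hsub (Ioo_subset_Icc_self hx)).2)
    (fun x hx => hflat x (hsub (Ioo_subset_Icc_self hx))) hur₁
  linarith

theorem exists_eq_of_mem_Ioo {v : ℝ} (hv : v ∈ Ioo 0 (u 0)) :
    ∃ r : ℝ, 0 < r ∧ (r : EReal) < R ∧ u r = v := by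
  obtain ⟨r₁, h0, hR, hur₁⟩ := hsol.exists_lt hv.1
  obtain ⟨r, hr, hur⟩ := intermediate_value_Icc' h0.le
    (hsol.continuousOn.mono (Icc_subset_domR ⟨h0.le, hR⟩)) ⟨hur₁.le, hv.2.le⟩
  have hr0 : r ≠ 0 := by rintro rfl; exact hv.2.ne' hur
  exact ⟨r, hr.1.lt_of_ne' hr0, lt_of_le_of_lt (EReal.coe_le_coe_iff.2 hr.2) hR, hur⟩

end Basic

section H1

variable (hm : 1 < m) (hf : H1cond b f) (hsol : IsRadialSolution 1 m f R u u')
include hm hf hsol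

theorem energy_eq {r : ℝ} (hr : r ∈ domR R) :
    (m - 1) / m * |u' r| ^ m + potential b f (u r) = potential b f (u 0) := by
  set E : ℝ → ℝ := fun r => (m - 1) / m * |u' r| ^ m + potential b f (u r)
  have hE : ContinuousOn E (domR R) :=
    (continuousOn_const.mul
      (hsol.continuousOn_deriv.abs.rpow_const fun _ _ => Or.inr (by linarith))).add
      (hf.continuousOn_potential.comp hsol.continuousOn fun _ hr => hsol.pos hr)
  have hE' : ∀ x : ℝ, 0 < x → (x : EReal) < R → HasDerivAt E 0 x := fun x h0 hR => by
    have h := ((hsol.hasDerivAt_signedPow h0 hR).abs_rpow_of_signedPow hm).add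
      ((hf.hasDerivAt_potential (hsol.pos ⟨h0.le, hR⟩)).comp x (hsol.hasDerivAt h0 hR))
    exact h.congr_deriv (by ring)
  have hEr : E r = E 0 := eq_of_hasDerivAt_zero hr.1 (hE.mono (Icc_subset_domR hr))
    fun x hx => hE' x hx.1 (Icc_subset_domR hr (Ioo_subset_Icc_self hx)).2
  simpa [E, hsol.deriv_zero, Real.zero_rpow (by linarith : m ≠ 0)] using hEr

theorem potential_le_initial {r : ℝ} (hr : r ∈ domR R) :
    potential b f (u r) ≤ potential b f (u 0) := by
  have hkin : 0 ≤ (m - 1) / m * |u' r| ^ m :=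
    mul_nonneg (div_nonneg (by linarith) (by linarith)) (by positivity)
  linarith [hsol.energy_eq hm hf hr]

theorem deriv_eq_zero_iff_potential_eq {r : ℝ} (hr : r ∈ domR R) :
    u' r = 0 ↔ potential b f (u r) = potential b f (u 0) := by
  have hc : (m - 1) / m ≠ 0 := div_ne_zero (by linarith) (by linarith)
  rw [← hsol.energy_eq hm hf hr, right_eq_add, mul_eq_zero, or_iff_right hc,
    Real.rpow_eq_zero (abs_nonneg _) (by linarith), abs_eq_zero]

theorem tendsto_potential_limR :
    Tendsto (fun r => potential b f (u r)) (limR R) (𝓝 (potential b f (u 0))) := by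
  have h : Tendsto (fun r => potential b f (u 0) - (m - 1) / m * |u' r| ^ m) (limR R)
      (𝓝 (potential b f (u 0) - (m - 1) / m * |0| ^ m)) :=
    tendsto_const_nhds.sub (tendsto_const_nhds.mul
      (hsol.tendsto_deriv_limR.abs.rpow_const (Or.inr (by linarith))))
  rw [abs_zero, Real.zero_rpow (by linarith), mul_zero, sub_zero] at h
  refine h.congr' ?_
  filter_upwards [hsol.eventually_limR_pos] with r hr
  linarith [hsol.energy_eq hm hf ⟨hr.1.le, hr.2⟩]

theorem potential_le_initial_of_mem_Ioc {v : ℝ} (hv : v ∈ Ioc 0 b) :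
    potential b f v ≤ potential b f (u 0) := by
  obtain ⟨r, h0, hR, hur⟩ := hsol.exists_lt hv.1
  have hur0 := hsol.pos ⟨h0.le, hR⟩
  calc potential b f v ≤ potential b f (u r) :=
        hf.potential_antitoneOn ⟨hur0, hur.le.trans hv.2⟩ hv hur.le
    _ ≤ potential b f (u 0) := hsol.potential_le_initial hm hf ⟨h0.le, hR⟩

theorem threshold_lt_initial : b < u 0 := by
  by_contra! hαb
  obtain ⟨r, hr, hur, hu'⟩ := hsol.exists_deriv_ne_zero (hsol.pos hsol.zero_mem_domR)
  refine hu' ((hsol.deriv_eq_zero_iff_potential_eq hm hf hr).2 (le_antisymm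
    (hsol.potential_le_initial hm hf hr) ?_))
  exact hf.potential_antitoneOn ⟨hsol.pos hr, hur.le.trans hαb⟩
    ⟨hsol.pos hsol.zero_mem_domR, hαb⟩ hur.le

theorem potential_lt_initial {v : ℝ} (hv : v ∈ Ioo 0 (u 0)) :
    potential b f v < potential b f (u 0) := by
  rcases lt_or_ge b v with hbv | hvb
  · exact hf.potential_strictMonoOn hbv.le (hsol.threshold_lt_initial hm hf).le hv.2
  refine (hsol.potential_le_initial_of_mem_Ioc hm hf ⟨hv.1, hvb⟩).lt_of_ne fun heq => ?_
  obtain ⟨r, hr, hur, hu'⟩ := hsol.exists_deriv_ne_zero hv.1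
  refine hu' ((hsol.deriv_eq_zero_iff_potential_eq hm hf hr).2 (le_antisymm
    (hsol.potential_le_initial hm hf hr) ?_))
  exact heq ▸ hf.potential_antitoneOn ⟨hsol.pos hr, hur.le.trans hvb⟩ ⟨hv.1, hvb⟩ hur.le

theorem tendsto_potential_nhdsGT :
    Tendsto (potential b f) (𝓝[>] 0) (𝓝 (potential b f (u 0))) := by
  refine tendsto_order.2 ⟨fun c hc => ?_, fun c hc => ?_⟩
  · have := limR_neBot hsol.1
    obtain ⟨r, ⟨⟨h0, hR⟩, hurb⟩, hcr⟩ :=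
      ((hsol.eventually_limR_pos.and
        (hsol.tendsto_limR.eventually_lt_const hf.threshold_pos)).and
        ((hsol.tendsto_potential_limR hm hf).eventually_const_lt hc)).exists
    filter_upwards [Ioo_mem_nhdsGT (hsol.pos ⟨h0.le, hR⟩)] with v hv
    exact hcr.trans_le (hf.potential_antitoneOn ⟨hv.1, hv.2.le.trans hurb.le⟩
      ⟨hsol.pos ⟨h0.le, hR⟩, hurb.le⟩ hv.2.le)
  · filter_upwards [Ioo_mem_nhdsGT hf.threshold_pos] with v hv
    exact (hsol.potential_le_initial_of_mem_Ioc hm hf ⟨hv.1, hv.2.le⟩).trans_lt hc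

theorem integral_eq_potential_sub {β : ℝ} (hβ : 0 < β) :
    ∫ τ in (0 : ℝ)..β, f τ = potential b f β - potential b f (u 0) := by
  obtain ⟨hint, h0b⟩ := integral_eq_neg_of_tendsto_nhdsGT hf.threshold_pos hf.continuousOn
    (fun x hx => hf.nonpos hx.1 hx.2.le) (hsol.tendsto_potential_nhdsGT hm hf)
  have hbβ : IntervalIntegrable f volume b β :=
    (hf.continuousOn.mono fun _ ht =>
      lt_of_lt_of_le (lt_min hf.threshold_pos hβ) ht.1).intervalIntegrable
  rw [← integral_add_adjacent_intervals hint hbβ, h0b, neg_add_eq_sub]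
  rfl

theorem le_initial {r : ℝ} (hr : r ∈ domR R) : u r ≤ u 0 := by
  by_contra! h
  exact (hsol.potential_le_initial hm hf hr).not_gt
    (hf.potential_strictMonoOn (hsol.threshold_lt_initial hm hf).le
      ((hsol.threshold_lt_initial hm hf).le.trans h.le) h)

theorem deriv_eq_zero_iff {r : ℝ} (hr : r ∈ domR R) : u' r = 0 ↔ u r = u 0 := by
  rw [hsol.deriv_eq_zero_iff_potential_eq hm hf hr]
  refine ⟨fun h => ?_, fun h => h ▸ rfl⟩
  by_contra hne
  exact (hsol.potential_lt_initial hm hf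
    ⟨hsol.pos hr, (hsol.le_initial hm hf hr).lt_of_ne hne⟩).ne h

theorem lt_initial {r : ℝ} (h0 : 0 < r) (hR : (r : EReal) < R) : u r < u 0 := by
  have hsub : Icc 0 r ⊆ domR R := Icc_subset_domR ⟨h0.le, hR⟩
  by_contra! hr
  obtain ⟨q, hq, hmin⟩ := isCompact_Icc.exists_isMinOn (nonempty_Icc.2 h0.le)
    (hsol.continuousOn.mono hsub)
  -- an interior minimum below `u 0` would be a critical point, where `u = u 0`
  have huq : u q = u 0 := by
    by_contra hne
    have hlt := (hsol.le_initial hm hf (hsub hq)).lt_of_ne hne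
    have hq0 : q ≠ 0 := by rintro rfl; exact hne rfl
    have hqr : q ≠ r := by rintro rfl; exact hlt.not_ge hr
    have hqI : q ∈ Ioo 0 r := ⟨hq.1.lt_of_ne' hq0, hq.2.lt_of_ne hqr⟩
    exact hne ((hsol.deriv_eq_zero_iff hm hf (hsub hq)).1
      ((hmin.isLocalMin (Icc_mem_nhds hqI.1 hqI.2)).hasDerivAt_eq_zero
        (hsol.hasDerivAt hqI.1 (hsub hq).2)))
  -- so `u ≡ u 0` on `[0, r]`, incompatible with `(|u'|^{m-2} u')' = -f (u 0) < 0`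
  have hconst : ∀ s ∈ Ioo 0 r, u' s = 0 := fun s hs =>
    (hsol.deriv_eq_zero_iff hm hf (hsub (Ioo_subset_Icc_self hs))).2 (le_antisymm
      (hsol.le_initial hm hf (hsub (Ioo_subset_Icc_self hs))) (huq ▸ hmin (Ioo_subset_Icc_self hs)))
  have hmid : r / 2 ∈ Ioo 0 r := ⟨half_pos h0, half_lt_self h0⟩
  have hflat : HasDerivAt (fun s => |u' s| ^ (m - 2) * u' s) 0 (r / 2) :=
    (hasDerivAt_const _ 0).congr_of_eventuallyEq <| by
      filter_upwards [Ioo_mem_nhds hmid.1 hmid.2] with s hs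
      simp [hconst s hs]
  have hf0 := (hsol.hasDerivAt_signedPow hmid.1 (hsub (Ioo_subset_Icc_self hmid)).2).unique hflat
  rw [neg_eq_zero, (hsol.deriv_eq_zero_iff hm hf (hsub (Ioo_subset_Icc_self hmid))).1
    (hconst _ hmid)] at hf0
  exact (hf.pos (hsol.threshold_lt_initial hm hf)).ne' hf0

theorem deriv_neg {r : ℝ} (h0 : 0 < r) (hR : (r : EReal) < R) : u' r < 0 := by
  have hsub : Icc 0 r ⊆ domR R := Icc_subset_domR ⟨h0.le, hR⟩
  have hne : ∀ d ∈ Ioc 0 r, u' d ≠ 0 := fun d hd h =>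
    (hsol.lt_initial hm hf hd.1 (hsub (Ioc_subset_Icc_self hd)).2).ne
      ((hsol.deriv_eq_zero_iff hm hf (hsub (Ioc_subset_Icc_self hd))).1 h)
  refine (hne r ⟨h0, le_rfl⟩).lt_of_le (not_lt.1 fun hpos => ?_)
  -- `u` decreases somewhere on `(0, r)`, so `u'` would have to cross zero
  obtain ⟨c, hc, hslope⟩ := exists_hasDerivAt_eq_slope u u' h0 (hsol.continuousOn.mono hsub)
    fun x hx => hsol.hasDerivAt hx.1 (hsub (Ioo_subset_Icc_self hx)).2
  have hc_neg : u' c < 0 := by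
    rw [hslope]
    exact div_neg_of_neg_of_pos (sub_neg.2 (hsol.lt_initial hm hf h0 hR)) (by linarith)
  obtain ⟨d, hd, hud⟩ := intermediate_value_Icc hc.2.le
    (hsol.continuousOn_deriv.mono ((Icc_subset_Icc_left hc.1.le).trans hsub)) ⟨hc_neg.le, hpos.le⟩
  exact hne d ⟨hc.1.trans_le hd.1, hd.2⟩ hud

end H1

end IsRadialSolution

/-- `|u'|` as a function of `u`, read off from the energy identity. -/
def speed (m b : ℝ) (f : ℝ → ℝ) (α v : ℝ) : ℝ :=
  (m / (m - 1) * (potential b f α - potential b f v)) ^ (1 / m)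

def travelTime (m b : ℝ) (f : ℝ → ℝ) (α v : ℝ) : ℝ :=
  ∫ t in (α / 2)..v, (speed m b f α t)⁻¹

namespace IsRadialSolution

variable {m b : ℝ} {f : ℝ → ℝ} {R : EReal} {u u' : ℝ → ℝ}

section TravelTime

variable (hm : 1 < m) (hf : H1cond b f) (hsol : IsRadialSolution 1 m f R u u')
include hm hf hsol

theorem speed_rpow_base_pos {v : ℝ} (hv : v ∈ Ioo 0 (u 0)) :
    0 < m / (m - 1) * (potential b f (u 0) - potential b f v) :=
  mul_pos (div_pos (by linarith) (by linarith)) (sub_pos.2 (hsol.potential_lt_initial hm hf hv))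

theorem speed_pos {v : ℝ} (hv : v ∈ Ioo 0 (u 0)) : 0 < speed m b f (u 0) v :=
  Real.rpow_pos_of_pos (hsol.speed_rpow_base_pos hm hf hv) _

theorem deriv_eq_neg_speed {r : ℝ} (h0 : 0 < r) (hR : (r : EReal) < R) :
    u' r = -speed m b f (u 0) (u r) := by
  have hm0 : m ≠ 0 := by linarith
  have hpow : |u' r| ^ m = m / (m - 1) * (potential b f (u 0) - potential b f (u r)) := by
    rw [← hsol.energy_eq hm hf ⟨h0.le, hR⟩]
    field_simp [show m - 1 ≠ 0 by linarith]
    ring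
  rw [speed, ← hpow, ← Real.rpow_mul (abs_nonneg _), mul_one_div_cancel hm0, Real.rpow_one,
    abs_of_neg (hsol.deriv_neg hm hf h0 hR), neg_neg]

theorem hasDerivAt_travelTime {v : ℝ} (hv : v ∈ Ioo 0 (u 0)) :
    HasDerivAt (travelTime m b f (u 0)) (speed m b f (u 0) v)⁻¹ v := by
  have hα := hsol.pos hsol.zero_mem_domR
  have hbase : ContinuousOn (fun t => m / (m - 1) * (potential b f (u 0) - potential b f t))
      (Ioo 0 (u 0)) :=
    continuousOn_const.mul (continuousOn_const.sub
      (hf.continuousOn_potential.mono fun _ ht => ht.1))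
  have hcont : ContinuousOn (fun t => (speed m b f (u 0) t)⁻¹) (Ioo 0 (u 0)) :=
    (hbase.rpow_const fun t ht => Or.inl (hsol.speed_rpow_base_pos hm hf ht).ne').inv₀
      fun t ht => (hsol.speed_pos hm hf ht).ne'
  have hsub : uIcc (u 0 / 2) v ⊆ Ioo 0 (u 0) :=
    ordConnected_Ioo.uIcc_subset ⟨half_pos hα, half_lt_self hα⟩ hv
  exact integral_hasDerivAt_right (hcont.mono hsub).intervalIntegrable
    (hcont.stronglyMeasurableAtFilter isOpen_Ioo v hv) (hcont.continuousAt (isOpen_Ioo.mem_nhds hv))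

theorem travelTime_strictMonoOn : StrictMonoOn (travelTime m b f (u 0)) (Ioo 0 (u 0)) := by
  refine strictMonoOn_of_deriv_pos (convex_Ioo _ _)
    (fun v hv => (hsol.hasDerivAt_travelTime hm hf hv).continuousAt.continuousWithinAt) ?_
  rw [interior_Ioo]
  intro v hv
  rw [(hsol.hasDerivAt_travelTime hm hf hv).deriv]
  exact inv_pos.2 (hsol.speed_pos hm hf hv)

theorem travelTime_add_eq {r s : ℝ} (hr : 0 < r) (hrs : r ≤ s) (hs : (s : EReal) < R) :
    travelTime m b f (u 0) (u s) + s = travelTime m b f (u 0) (u r) + r := by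
  have hsub : Icc r s ⊆ domR R :=
    (Icc_subset_Icc_left hr.le).trans (Icc_subset_domR ⟨hr.le.trans hrs, hs⟩)
  have hd : ∀ x ∈ Icc r s, HasDerivAt (fun x => travelTime m b f (u 0) (u x) + x) 0 x := by
    intro x hx
    have h0 : 0 < x := hr.trans_le hx.1
    have hR : (x : EReal) < R := (hsub hx).2
    have hux : u x ∈ Ioo 0 (u 0) := ⟨hsol.pos (hsub hx), hsol.lt_initial hm hf h0 hR⟩
    refine (((hsol.hasDerivAt_travelTime hm hf hux).comp x (hsol.hasDerivAt h0 hR)).add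
      (hasDerivAt_id x)).congr_deriv ?_
    rw [hsol.deriv_eq_neg_speed hm hf h0 hR, mul_neg,
      inv_mul_cancel₀ (hsol.speed_pos hm hf hux).ne']
    norm_num
  exact eq_of_hasDerivAt_zero hrs (fun x hx => (hd x hx).continuousAt.continuousWithinAt)
    fun x hx => hd x (Ioo_subset_Icc_self hx)

theorem tendsto_travelTime_nhdsLT {r : ℝ} (h0 : 0 < r) (hR : (r : EReal) < R) :
    Tendsto (travelTime m b f (u 0)) (𝓝[<] u 0) (𝓝 (travelTime m b f (u 0) (u r) + r)) := by
  set C := travelTime m b f (u 0) (u r) + r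
  have hC : ∀ s : ℝ, 0 < s → (s : EReal) < R → travelTime m b f (u 0) (u s) + s = C :=
    fun s hs0 hsR => (le_total r s).elim (hsol.travelTime_add_eq hm hf h0 · hsR)
      fun h => (hsol.travelTime_add_eq hm hf hs0 h hR).symm
  refine tendsto_order.2 ⟨fun c hc => ?_, fun c hc => ?_⟩
  · set s := min ((C - c) / 2) r
    have hs0 : 0 < s := lt_min (by linarith) h0
    have hsR : (s : EReal) < R := lt_of_le_of_lt (EReal.coe_le_coe_iff.2 (min_le_right _ _)) hR
    have hus : u s ∈ Ioo 0 (u 0) := ⟨hsol.pos ⟨hs0.le, hsR⟩, hsol.lt_initial hm hf hs0 hsR⟩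
    filter_upwards [Ioo_mem_nhdsLT hus.2] with v hv
    calc c < C - s := by linarith [min_le_left ((C - c) / 2) r]
      _ = travelTime m b f (u 0) (u s) := by linarith [hC s hs0 hsR]
      _ < travelTime m b f (u 0) v :=
        hsol.travelTime_strictMonoOn hm hf hus ⟨hus.1.trans hv.1, hv.2⟩ hv.1
  · filter_upwards [Ioo_mem_nhdsLT (hsol.pos hsol.zero_mem_domR)] with v hv
    obtain ⟨s, hs0, hsR, rfl⟩ := hsol.exists_eq_of_mem_Ioo hv
    linarith [hC s hs0 hsR]

end TravelTime

variable {R₁ R₂ : EReal} {u₁ u₁' u₂ u₂' : ℝ → ℝ}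

theorem integral_initial_eq_zero (hm : 1 < m) (hf : H1cond b f)
    (hsol : IsRadialSolution 1 m f R u u') : ∫ τ in (0 : ℝ)..(u 0), f τ = 0 := by
  rw [hsol.integral_eq_potential_sub hm hf (hsol.pos hsol.zero_mem_domR), sub_self]

theorem eq_initial_of_integral_eq_zero (hm : 1 < m) (hf : H1cond b f)
    (hsol : IsRadialSolution 1 m f R u u') {β : ℝ} (hβ : b < β)
    (hF : ∫ τ in (0 : ℝ)..β, f τ = 0) : β = u 0 := by
  rw [hsol.integral_eq_potential_sub hm hf (hf.threshold_pos.trans hβ), sub_eq_zero] at hF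
  exact hf.potential_strictMonoOn.injOn hβ.le (hsol.threshold_lt_initial hm hf).le hF

/-- With the same `α`, both `Ψ (u₁ r) + r` and `Ψ (u₂ r) + r` equal `lim_{v → α⁻} Ψ v`. -/
theorem eq_of_initial_eq (hm : 1 < m) (hf : H1cond b f)
    (h₁ : IsRadialSolution 1 m f R₁ u₁ u₁') (h₂ : IsRadialSolution 1 m f R₂ u₂ u₂')
    (hα : u₁ 0 = u₂ 0) {r : ℝ} (h0 : 0 < r) (hR₁ : (r : EReal) < R₁) (hR₂ : (r : EReal) < R₂) :
    u₁ r = u₂ r := by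
  have hC := tendsto_nhds_unique (h₁.tendsto_travelTime_nhdsLT hm hf h0 hR₁)
    (hα ▸ h₂.tendsto_travelTime_nhdsLT hm hf h0 hR₂)
  have hu₂ : u₂ r ∈ Ioo 0 (u₁ 0) := hα ▸ ⟨h₂.pos ⟨h0.le, hR₂⟩, h₂.lt_initial hm hf h0 hR₂⟩
  exact h₁.travelTime_strictMonoOn hm hf |>.injOn
    ⟨h₁.pos ⟨h0.le, hR₁⟩, h₁.lt_initial hm hf h0 hR₁⟩ hu₂ (add_right_cancel hC)

theorem not_lt_of_eqOn (h₁ : IsRadialSolution 1 m f R₁ u₁ u₁')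
    (h₂ : IsRadialSolution 1 m f R₂ u₂ u₂')
    (heq : ∀ r : ℝ, 0 < r → (r : EReal) < R₁ → (r : EReal) < R₂ → u₁ r = u₂ r) :
    ¬ R₁ < R₂ := by
  intro hlt
  obtain ⟨ρ, rfl⟩ : ∃ ρ : ℝ, (ρ : EReal) = R₁ :=
    ⟨R₁.toReal, EReal.coe_toReal hlt.ne_top (ne_bot_of_gt h₁.1)⟩
  have hρ0 : 0 < ρ := by exact_mod_cast h₁.1
  have hρ : ρ ∈ domR R₂ := ⟨hρ0.le, hlt⟩
  have h₁lim : Tendsto u₁ (𝓝[<] ρ) (𝓝 0) := limR_coe ρ ▸ h₁.tendsto_limR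
  have h₂lim : Tendsto u₂ (𝓝[<] ρ) (𝓝 (u₂ ρ)) := by
    have := (h₂.continuousOn ρ hρ).mono (s := Ioo 0 ρ)
      fun s hs => ⟨hs.1.le, lt_trans (EReal.coe_lt_coe_iff.2 hs.2) hlt⟩
    rwa [ContinuousWithinAt, nhdsWithin_Ioo_eq_nhdsLT hρ0] at this
  have hev : u₁ =ᶠ[𝓝[<] ρ] u₂ := by
    filter_upwards [Ioo_mem_nhdsLT hρ0] with r hr
    exact heq r hr.1 (EReal.coe_lt_coe_iff.2 hr.2) (lt_trans (EReal.coe_lt_coe_iff.2 hr.2) hlt)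
  exact (h₂.pos hρ).ne (tendsto_nhds_unique h₂lim (h₁lim.congr' hev)).symm

end IsRadialSolution

/-- for `N = 1`, `m > 1`, under (H1), there is at most one radial solution,
and for any radial solution `u`, `α = u 0` is the unique number in `(b, ∞)` with `F α = 0`. -/
theorem stmt0 (m b : ℝ) (f : ℝ → ℝ) (hm : 1 < m) (hf : H1cond b f)
    (R₁ R₂ : EReal) (u₁ u₁' u₂ u₂' : ℝ → ℝ)
    (h₁ : IsRadialSolution 1 m f R₁ u₁ u₁')
    (h₂ : IsRadialSolution 1 m f R₂ u₂ u₂') :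
    (R₁ = R₂ ∧ ∀ r ∈ domR R₁, u₁ r = u₂ r) ∧
    (b < u₁ 0 ∧ (∫ τ in (0 : ℝ)..(u₁ 0), f τ) = 0 ∧
      ∀ β : ℝ, b < β → (∫ τ in (0 : ℝ)..β, f τ) = 0 → β = u₁ 0) := by
  have hα : u₁ 0 = u₂ 0 := (h₁.eq_initial_of_integral_eq_zero hm hf
    (h₂.threshold_lt_initial hm hf) (h₂.integral_initial_eq_zero hm hf)).symm
  have hagree : ∀ r : ℝ, 0 < r → (r : EReal) < R₁ → (r : EReal) < R₂ → u₁ r = u₂ r :=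
    fun r => h₁.eq_of_initial_eq hm hf h₂ hα
  have hR : R₁ = R₂ := le_antisymm
    (not_lt.1 (h₂.not_lt_of_eqOn h₁ fun r h0 h₂R h₁R => (hagree r h0 h₁R h₂R).symm))
    (not_lt.1 (h₁.not_lt_of_eqOn h₂ hagree))
  refine ⟨⟨hR, fun r hr => ?_⟩, h₁.threshold_lt_initial hm hf, h₁.integral_initial_eq_zero hm hf,
    fun β hβ hF => h₁.eq_initial_of_integral_eq_zero hm hf hβ hF⟩
  rcases hr.1.eq_or_lt with rfl | h0
  · exact hα
  · exact hagree r h0 hr.2 (hR ▸ hr.2)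

end
end

section
/- Let m > 1 and 1 ≤ N ≤ m, assume (H1), and assume f is continuously differentiable on (0,∞). Let u be a radial solution on [0,R) with α = u(0), let r = r(u) be its inverse on (0,α), and set ω(u) = r(u)^{N−1}/(r'(u)|r'(u)|^{m−2}) and, for a ∈ ℝ, P(u) = a u ω(u) + r(u)^N ( (m−1)/m · 1/|r'(u)|^m + (a/N) u f(u) ). Then for all u ∈ (0,α): if a ≠ 0, P(u) = (a + 1 − N/m) ∫_α^u ω(τ) dτ + (a/N) ∫_α^u r(τ)^N ( τ f'(τ) − ((N−a)/a) f(τ) ) dτ; and if a = 0, P(u) = −((N−m)/m) ∫_α^u ω(τ) dτ − ∫_α^u r(τ)^N f(τ) dτ. -/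
/-!
Read along the inverse `r(u)`, `ω` is the flux `r^{N-1}|u'|^{m-2}u'` of the radial equation, so
`ω' = -r^{N-1} f(u) r'`; combined with the transformed equation for `r''` this gives
`P' = (a + 1 - N/m) ω + r^N ((a/N) u f'(u) + ((a - N)/N) f(u))`.
As `u → α⁻` we have `r(u) → 0` and `u'(r(u)) → 0` (because `u'(0) = 0`), so `P`, `ω` and `r^N g`
(for continuous `g`) tend to `0`. The fundamental theorem of calculus on `[u, α)` then yields
`P(u) = ∫_α^u P'`, and both identities are rearrangements of this integrand.
-/

open Filter Set MeasureTheory intervalIntegral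

noncomputable section

open Topology

lemma abs_rpow_sub_two_mul_self_mul_self {y : ℝ} (hy : y ≠ 0) (p : ℝ) :
    |y| ^ (p - 2) * y * y = |y| ^ p := by
  calc |y| ^ (p - 2) * y * y = |y| ^ (p - 2) * |y| ^ (2 : ℝ) := by
        rw [Real.rpow_two, sq_abs]; ring
    _ = |y| ^ p := by rw [← Real.rpow_add (abs_pos.2 hy)]; ring_nf

lemma tendsto_abs_rpow_sub_two_mul_self_zero {p : ℝ} (hp : 1 < p) :
    Tendsto (fun y : ℝ => |y| ^ (p - 2) * y) (𝓝 0) (𝓝 0) := by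
  have hpow : Tendsto (fun y : ℝ => |y| ^ (p - 1)) (𝓝 0) (𝓝 0) := by
    simpa [Function.comp_def, Real.zero_rpow (by linarith : p - 1 ≠ 0)] using
      ((Real.continuous_rpow_const (by linarith : 0 ≤ p - 1)).comp continuous_abs).tendsto 0
  refine squeeze_zero_norm (fun y => le_of_eq ?_) hpow
  rw [Real.norm_eq_abs, abs_mul, abs_of_nonneg (Real.rpow_nonneg (abs_nonneg y) _),
    ← Real.rpow_add_one' (abs_nonneg y) (by linarith)]
  ring_nf

lemma intervalIntegrable_of_continuousOn_Ico_of_tendsto {F : ℝ → ℝ} {a b L : ℝ} (hab : a ≤ b)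
    (hc : ContinuousOn F (Ico a b)) (ht : Tendsto F (𝓝[<] b) (𝓝 L)) :
    IntervalIntegrable F volume a b := by
  classical
  have hcont : ContinuousOn (Function.update F b L) (Icc a b) := by
    intro x hx
    rcases eq_or_lt_of_le hx.2 with rfl | hxb
    · exact continuousWithinAt_update_same.2
        (ht.mono_left (nhdsWithin_mono _ fun y hy => lt_of_le_of_ne hy.1.2 hy.2))
    · rw [continuousWithinAt_update_of_ne hxb.ne]
      exact (hc x ⟨hx.1, hxb⟩).mono_of_mem_nhdsWithin
        (mem_nhdsWithin.2 ⟨Iio b, isOpen_Iio, hxb, fun y hy => ⟨hy.2.1, hy.1⟩⟩)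
  refine (intervalIntegrable_congr_uIoo fun x hx => ?_).2 (hcont.intervalIntegrable_of_Icc hab)
  rw [uIoo_of_le hab] at hx
  exact (Function.update_of_ne hx.2.ne _ _).symm

lemma domR_mem_nhds_s11 {R : EReal} {x : ℝ} (hx : 0 < x) (hxR : (x : EReal) < R) :
    domR R ∈ 𝓝 x :=
  mem_of_superset ((isOpen_Ioi.inter (isOpen_Iio.preimage continuous_coe_real_ereal)).mem_nhds
    ⟨hx, hxR⟩) fun _ hr => ⟨le_of_lt hr.1, hr.2⟩

lemma omegaF_eq_mul_one_div_abs_rpow {N : ℕ} {m : ℝ} {rr rr' : ℝ → ℝ} {v : ℝ}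
    (hv : rr' v ≠ 0) :
    omegaF N m rr rr' v = rr v ^ (N - 1) * rr' v * (1 / |rr' v| ^ m) := by
  have : |rr' v| ^ (m - 2) ≠ 0 := (Real.rpow_pos_of_pos (abs_pos.2 hv) _).ne'
  rw [omegaF, ← abs_rpow_sub_two_mul_self_mul_self hv m]
  field_simp

section RadialSolution

variable {N : ℕ} {m α : ℝ} {f f' : ℝ → ℝ} {R : EReal} {u u' rr rr' rr'' : ℝ → ℝ}

lemma IsRadialSolution.tendsto_deriv_nhdsWithin_zero (hu : IsRadialSolution N m f R u u') :
    Tendsto u' (𝓝[domR R] 0) (𝓝 0) := by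
  have h := hu.2.2.1 0 ⟨le_rfl, hu.1⟩
  rwa [ContinuousWithinAt, hu.2.2.2.2.1] at h

lemma IsRadialSolution.tendsto_flux (hm : 1 < m) (hu : IsRadialSolution N m f R u u') :
    Tendsto (fun s => s ^ (N - 1) * |u' s| ^ (m - 2) * u' s) (𝓝[domR R] 0) (𝓝 0) := by
  simpa [mul_assoc] using (((continuous_pow (N - 1)).tendsto 0).mono_left nhdsWithin_le_nhds).mul
    ((tendsto_abs_rpow_sub_two_mul_self_zero hm).comp hu.tendsto_deriv_nhdsWithin_zero)

lemma IsInvSol.strictAntiOn (hinv : IsInvSol N m α f R u rr rr' rr'') :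
    StrictAntiOn rr (Ioo 0 α) := by
  refine strictAntiOn_of_deriv_neg (convex_Ioo 0 α)
    (fun w hw => (hinv.1 w hw).2.2.2.1.continuousAt.continuousWithinAt) fun w hw => ?_
  rw [interior_Ioo] at hw
  rw [(hinv.1 w hw).2.2.2.1.deriv]
  exact (hinv.1 w hw).2.2.2.2.1

lemma IsInvSol.eventually_mem_Ioo (hR : 0 < R) (hinv : IsInvSol N m α f R u rr rr' rr'') :
    ∀ᶠ w in 𝓝[<] α, w ∈ Ioo 0 α := by
  obtain ⟨c, hc0, hcR⟩ := EReal.lt_iff_exists_real_btwn.1 hR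
  obtain ⟨v₀, hv₀, -⟩ := hinv.2 c (by exact_mod_cast hc0) hcR
  exact Ioo_mem_nhdsLT (hv₀.1.trans hv₀.2)

lemma IsInvSol.tendsto_nhdsWithin_domR (hR : 0 < R) (hinv : IsInvSol N m α f R u rr rr' rr'') :
    Tendsto rr (𝓝[<] α) (𝓝[domR R] 0) := by
  obtain ⟨c, hc0, hcR⟩ := EReal.lt_iff_exists_real_btwn.1 hR
  have hmem := hinv.eventually_mem_Ioo hR
  refine tendsto_nhdsWithin_iff.2 ⟨tendsto_order.2 ⟨fun l hl => ?_, fun l hl => ?_⟩, ?_⟩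
  · filter_upwards [hmem] with w hw using hl.trans (hinv.1 w hw).1
  · obtain ⟨v₁, hv₁, hrv₁⟩ := hinv.2 (min c (l / 2)) (lt_min (by exact_mod_cast hc0) (half_pos hl))
      ((EReal.coe_le_coe_iff.2 (min_le_left _ _)).trans_lt hcR)
    filter_upwards [Ioo_mem_nhdsLT hv₁.2] with w hw
    calc rr w < rr v₁ := hinv.strictAntiOn hv₁ ⟨hv₁.1.trans hw.1, hw.2⟩ hw.1
      _ = min c (l / 2) := hrv₁
      _ < l := (min_le_right _ _).trans_lt (half_lt_self hl)
  · filter_upwards [hmem] with w hw using ⟨(hinv.1 w hw).1.le, (hinv.1 w hw).2.1⟩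

lemma IsInvSol.tendsto_nhds_zero (hR : 0 < R) (hinv : IsInvSol N m α f R u rr rr' rr'') :
    Tendsto rr (𝓝[<] α) (𝓝 0) :=
  (hinv.tendsto_nhdsWithin_domR hR).mono_right nhdsWithin_le_nhds

lemma IsInvSol.deriv_comp_eq_inv (hu : IsRadialSolution N m f R u u')
    (hinv : IsInvSol N m α f R u rr rr' rr'') {v : ℝ} (hv : v ∈ Ioo 0 α) :
    u' (rr v) = (rr' v)⁻¹ := by
  obtain ⟨hr0, hrR, -, hdr, -, -, -⟩ := hinv.1 v hv
  have hud : HasDerivAt u (u' (rr v)) (rr v) :=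
    (hu.2.1 (rr v) ⟨hr0.le, hrR⟩).hasDerivAt (domR_mem_nhds_s11 hr0 hrR)
  have hid : (u ∘ rr) =ᶠ[𝓝 v] id := by
    filter_upwards [isOpen_Ioo.mem_nhds hv] with w hw using (hinv.1 w hw).2.2.1
  exact eq_inv_of_mul_eq_one_left <|
    ((hud.comp v hdr).congr_of_eventuallyEq hid.symm).unique (hasDerivAt_id v)

lemma IsInvSol.omegaF_eq_flux (hu : IsRadialSolution N m f R u u')
    (hinv : IsInvSol N m α f R u rr rr' rr'') {v : ℝ} (hv : v ∈ Ioo 0 α) :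
    omegaF N m rr rr' v = rr v ^ (N - 1) * |u' (rr v)| ^ (m - 2) * u' (rr v) := by
  rw [hinv.deriv_comp_eq_inv hu hv, omegaF, abs_inv, Real.inv_rpow (abs_nonneg _), div_eq_mul_inv,
    mul_inv]
  ring

lemma IsInvSol.hasDerivAt_omegaF (hu : IsRadialSolution N m f R u u')
    (hinv : IsInvSol N m α f R u rr rr' rr'') {v : ℝ} (hv : v ∈ Ioo 0 α) :
    HasDerivAt (omegaF N m rr rr') (-(rr v ^ (N - 1) * f v) * rr' v) v := by
  obtain ⟨hr0, hrR, hurr, hdr, -, -, -⟩ := hinv.1 v hv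
  have hflux := hu.2.2.2.2.2.1 (rr v) hr0 hrR
  rw [hurr] at hflux
  refine (hflux.comp v hdr).congr_of_eventuallyEq ?_
  filter_upwards [isOpen_Ioo.mem_nhds hv] with w hw using hinv.omegaF_eq_flux hu hw

lemma IsInvSol.hasDerivAt_one_div_abs_rpow (hm : 1 < m) (hinv : IsInvSol N m α f R u rr rr' rr'')
    {v : ℝ} (hv : v ∈ Ioo 0 α) :
    HasDerivAt (fun w => 1 / |rr' w| ^ m)
      (-(m / (m - 1)) * (((N : ℝ) - 1) * rr' v * (1 / |rr' v| ^ m) / rr v + f v)) v := by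
  obtain ⟨-, -, -, -, hneg, hdr', hode⟩ := hinv.1 v hv
  have ht : 0 < -rr' v := neg_pos.2 hneg
  have hinvpow := (hdr'.neg.rpow_const (p := m) (Or.inl ht.ne')).inv (Real.rpow_pos_of_pos ht m).ne'
  have habs : (fun w => ((-rr' w) ^ m)⁻¹) =ᶠ[𝓝 v] fun w => 1 / |rr' w| ^ m := by
    filter_upwards [hdr'.continuousAt.eventually_lt_const hneg] with w hw
    rw [abs_of_neg hw, one_div]
  refine (hinvpow.congr_of_eventuallyEq habs.symm).congr_deriv ?_
  have hm1 : m - 1 ≠ 0 := by linarith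
  rw [abs_of_neg hneg] at hode
  simp only [Pi.neg_apply]
  rw [abs_of_neg hneg, Real.rpow_sub_one ht.ne']
  field_simp at hode ⊢
  rw [neg_inj, div_eq_iff hneg.ne]
  linear_combination hode

lemma IsInvSol.hasDerivAt_PF (hm : 1 < m) (hN : 1 ≤ N)
    (hf' : ∀ x : ℝ, 0 < x → HasDerivAt f (f' x) x) (hu : IsRadialSolution N m f R u u')
    (hinv : IsInvSol N m α f R u rr rr' rr'') {v : ℝ} (hv : v ∈ Ioo 0 α) (a : ℝ) :
    HasDerivAt (PF N m a f rr rr')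
      ((a + 1 - (N : ℝ) / m) * omegaF N m rr rr' v +
        rr v ^ N * (a / N * (v * f' v) + (a - N) / N * f v)) v := by
  obtain ⟨hr0, -, -, hdr, hneg, -, -⟩ := hinv.1 v hv
  have hP : HasDerivAt (PF N m a f rr rr') _ v :=
    (((hasDerivAt_id v).const_mul a).mul (hinv.hasDerivAt_omegaF hu hv)).add
      ((hdr.pow N).mul (((hinv.hasDerivAt_one_div_abs_rpow hm hv).const_mul ((m - 1) / m)).add
        (((hasDerivAt_id v).const_mul (a / N)).mul (hf' v hv.1))))
  refine hP.congr_deriv ?_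
  have hN0 : (N : ℝ) ≠ 0 := Nat.cast_ne_zero.2 (by omega)
  have hm1 : m - 1 ≠ 0 := by linarith
  have hrN : rr v ^ N = rr v ^ (N - 1) * rr v := by rw [← pow_succ, Nat.sub_add_cancel hN]
  simp only [id_eq, Pi.pow_apply]
  rw [omegaF_eq_mul_one_div_abs_rpow hneg.ne, hrN]
  field_simp
  ring

lemma IsInvSol.tendsto_omegaF (hm : 1 < m) (hu : IsRadialSolution N m f R u u')
    (hinv : IsInvSol N m α f R u rr rr' rr'') :
    Tendsto (omegaF N m rr rr') (𝓝[<] α) (𝓝 0) := by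
  refine ((hu.tendsto_flux hm).comp (hinv.tendsto_nhdsWithin_domR hu.1)).congr' ?_
  filter_upwards [hinv.eventually_mem_Ioo hu.1] with w hw
  exact (hinv.omegaF_eq_flux hu hw).symm

lemma IsInvSol.tendsto_one_div_abs_rpow (hm : 0 < m) (hu : IsRadialSolution N m f R u u')
    (hinv : IsInvSol N m α f R u rr rr' rr'') :
    Tendsto (fun w => 1 / |rr' w| ^ m) (𝓝[<] α) (𝓝 0) := by
  have h : Tendsto (fun s => |u' s| ^ m) (𝓝[domR R] 0) (𝓝 0) := by
    simpa [Function.comp_def, Real.zero_rpow hm.ne'] using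
      (((Real.continuous_rpow_const hm.le).comp continuous_abs).tendsto 0).comp
        hu.tendsto_deriv_nhdsWithin_zero
  refine (h.comp (hinv.tendsto_nhdsWithin_domR hu.1)).congr' ?_
  filter_upwards [hinv.eventually_mem_Ioo hu.1] with w hw
  rw [Function.comp_apply, hinv.deriv_comp_eq_inv hu hw, abs_inv, Real.inv_rpow (abs_nonneg _),
    one_div]

lemma IsInvSol.tendsto_PF (hm : 1 < m) (hN : 1 ≤ N) (hf : ContinuousOn f (Ioi 0))
    (hu : IsRadialSolution N m f R u u') (hinv : IsInvSol N m α f R u rr rr' rr'')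
    (hα : 0 < α) (a : ℝ) :
    Tendsto (PF N m a f rr rr') (𝓝[<] α) (𝓝 0) := by
  have hid : Tendsto (fun w : ℝ => w) (𝓝[<] α) (𝓝 α) :=
    tendsto_nhdsWithin_of_tendsto_nhds tendsto_id
  have hfα : Tendsto f (𝓝[<] α) (𝓝 (f α)) :=
    (hf.continuousAt (Ioi_mem_nhds hα)).tendsto.mono_left nhdsWithin_le_nhds
  have h : Tendsto (PF N m a f rr rr') (𝓝[<] α)
      (𝓝 (a * α * 0 + 0 ^ N * ((m - 1) / m * 0 + a / N * α * f α))) :=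
    ((tendsto_const_nhds.mul hid).mul (hinv.tendsto_omegaF hm hu)).add
      (((hinv.tendsto_nhds_zero hu.1).pow N).mul
        ((tendsto_const_nhds.mul (hinv.tendsto_one_div_abs_rpow (by linarith) hu)).add
          ((tendsto_const_nhds.mul hid).mul hfα)))
  simpa [zero_pow (by omega : N ≠ 0)] using h

lemma IsInvSol.intervalIntegrable_omegaF (hm : 1 < m) (hu : IsRadialSolution N m f R u u')
    (hinv : IsInvSol N m α f R u rr rr' rr'') {v : ℝ} (hv : v ∈ Ioo 0 α) :
    IntervalIntegrable (omegaF N m rr rr') volume v α :=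
  intervalIntegrable_of_continuousOn_Ico_of_tendsto hv.2.le
    (fun _ hx =>
      (hinv.hasDerivAt_omegaF hu ⟨hv.1.trans_le hx.1, hx.2⟩).continuousAt.continuousWithinAt)
    (hinv.tendsto_omegaF hm hu)

lemma IsInvSol.intervalIntegrable_pow_mul (hR : 0 < R) (hinv : IsInvSol N m α f R u rr rr' rr'')
    {g : ℝ → ℝ} (hg : ContinuousOn g (Ioi 0)) {v : ℝ} (hv : v ∈ Ioo 0 α) :
    IntervalIntegrable (fun τ => rr τ ^ N * g τ) volume v α := by
  refine intervalIntegrable_of_continuousOn_Ico_of_tendsto hv.2.le (fun x hx => ?_)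
    (((hinv.tendsto_nhds_zero hR).pow N).mul
      ((hg.continuousAt (Ioi_mem_nhds (hv.1.trans hv.2))).tendsto.mono_left nhdsWithin_le_nhds))
  have hx' : x ∈ Ioo 0 α := ⟨hv.1.trans_le hx.1, hx.2⟩
  exact (((hinv.1 x hx').2.2.2.1.continuousAt.pow N).mul
    (hg.continuousAt (Ioi_mem_nhds hx'.1))).continuousWithinAt

lemma IsInvSol.PF_eq_integral (hm : 1 < m) (hN : 1 ≤ N) (hf : ContinuousOn f (Ioi 0))
    (hf' : ∀ x : ℝ, 0 < x → HasDerivAt f (f' x) x) (hf'c : ContinuousOn f' (Ioi 0))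
    (hu : IsRadialSolution N m f R u u') (hinv : IsInvSol N m α f R u rr rr' rr'')
    {v : ℝ} (hv : v ∈ Ioo 0 α) (a : ℝ) :
    PF N m a f rr rr' v =
      (a + 1 - (N : ℝ) / m) * (∫ τ in α..v, omegaF N m rr rr' τ) +
        ∫ τ in α..v, rr τ ^ N * (a / N * (τ * f' τ) + (a - N) / N * f τ) := by
  have hg : ContinuousOn (fun τ => a / N * (τ * f' τ) + (a - N) / N * f τ) (Ioi 0) := by
    fun_prop
  have hω := hinv.intervalIntegrable_omegaF hm hu hv
  have hH := hinv.intervalIntegrable_pow_mul hu.1 hg hv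
  rw [← intervalIntegral.integral_const_mul, ← integral_add (hω.symm.const_mul _) hH.symm,
    integral_symm,
    integral_eq_sub_of_hasDerivAt_of_tendsto hv.2
      (fun x hx => hinv.hasDerivAt_PF hm hN hf' hu ⟨hv.1.trans hx.1, hx.2⟩ a)
      ((hω.const_mul _).add hH)
      ((hinv.hasDerivAt_PF hm hN hf' hu hv a).continuousAt.tendsto.mono_left nhdsWithin_le_nhds)
      (hinv.tendsto_PF hm hN hf hu (hv.1.trans hv.2) a)]
  ring

end RadialSolution

theorem stmt11_general (N : ℕ) (m b : ℝ) (f f' : ℝ → ℝ) (hm : 1 < m)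
    (hN1 : 1 ≤ N) (hf : H1cond b f)
    (hf' : ∀ x : ℝ, 0 < x → HasDerivAt f (f' x) x)
    (hf'c : ContinuousOn f' (Set.Ioi 0))
    (R : EReal) (u u' rr rr' rr'' : ℝ → ℝ)
    (hu : IsRadialSolution N m f R u u')
    (hinv : IsInvSol N m (u 0) f R u rr rr' rr'') :
    ∀ v ∈ Set.Ioo (0 : ℝ) (u 0), ∀ a : ℝ,
      (a ≠ 0 →
        PF N m a f rr rr' v =
          (a + 1 - (N : ℝ) / m) * (∫ τ in (u 0)..v, omegaF N m rr rr' τ) +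
            a / (N : ℝ) *
              ∫ τ in (u 0)..v, rr τ ^ N * (τ * f' τ - ((N : ℝ) - a) / a * f τ)) ∧
      (a = 0 →
        PF N m a f rr rr' v =
          -(((N : ℝ) - m) / m) * (∫ τ in (u 0)..v, omegaF N m rr rr' τ) -
            ∫ τ in (u 0)..v, rr τ ^ N * f τ) := by
  intro v hv a
  have hN0 : (N : ℝ) ≠ 0 := Nat.cast_ne_zero.2 (by omega)
  rw [hinv.PF_eq_integral hm hN1 hf.2.1 hf' hf'c hu hv a]
  refine ⟨fun ha => ?_, fun ha => ?_⟩
  · rw [← intervalIntegral.integral_const_mul (a / (N : ℝ))]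
    congr 1
    refine integral_congr fun τ _ => ?_
    field_simp
    ring
  · subst ha
    rw [sub_eq_add_neg _ (∫ τ in (u 0)..v, rr τ ^ N * f τ), ← intervalIntegral.integral_neg]
    congr 1
    · field_simp
      ring
    · refine integral_congr fun τ _ => ?_
      field_simp
      ring

/-- for `m > 1`, `1 ≤ N ≤ m`, (H1), and `f` continuously differentiable on
`(0,∞)`: along the inverse `r = r(u)` of a radial solution, the function `P` admits the
integral representations of Proposition 3.2, both for `a ≠ 0` and for `a = 0`. -/
theorem stmt11 (N : ℕ) (m b : ℝ) (f f' : ℝ → ℝ) (hm : 1 < m)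
    (hN1 : 1 ≤ N) (hNm : (N : ℝ) ≤ m) (hf : H1cond b f)
    (hf' : ∀ x : ℝ, 0 < x → HasDerivAt f (f' x) x)
    (hf'c : ContinuousOn f' (Set.Ioi 0))
    (R : EReal) (u u' rr rr' rr'' : ℝ → ℝ)
    (hu : IsRadialSolution N m f R u u')
    (hinv : IsInvSol N m (u 0) f R u rr rr' rr'') :
    ∀ v ∈ Set.Ioo (0 : ℝ) (u 0), ∀ a : ℝ,
      (a ≠ 0 →
        PF N m a f rr rr' v =
          (a + 1 - (N : ℝ) / m) * (∫ τ in (u 0)..v, omegaF N m rr rr' τ) +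
            a / (N : ℝ) *
              ∫ τ in (u 0)..v, rr τ ^ N * (τ * f' τ - ((N : ℝ) - a) / a * f τ)) ∧
      (a = 0 →
        PF N m a f rr rr' v =
          -(((N : ℝ) - m) / m) * (∫ τ in (u 0)..v, omegaF N m rr rr' τ) -
            ∫ τ in (u 0)..v, rr τ ^ N * f τ) :=
  stmt11_general N m b f f' hm hN1 hf hf' hf'c R u u' rr rr' rr'' hu hinv

end
end

section
/- Let m > 1 and 2 ≤ N ≤ m, and assume (H1). Let u₁, u₂ be two radial solutions with b < α₁ < α₂ and set t(u) = r₁(u) − r₂(u) on (0,α₁). If u ∈ (0,α₁) satisfies t'(u) = 0 and t(u) > 0, then t''(u) < 0; if t'(u) = 0 and t(u) < 0, then t''(u) > 0. In particular, t has no positive local minimum and no negative local maximum in (0,α₁). -/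
open Filter Set MeasureTheory intervalIntegral

noncomputable section

lemma noMinAux (g g' : ℝ → ℝ) (v δ c2 : ℝ) (hδ : 0 < δ)
    (hg : ∀ w ∈ Set.Ioo (v - δ) (v + δ), HasDerivAt g (g' w) w)
    (hg' : HasDerivAt g' c2 v) (h0 : g' v = 0) (h2 : c2 < 0) :
    ¬ IsLocalMin g v := by
  intro hmin
  have hslope : Tendsto (slope g' v) (nhdsWithin v {v}ᶜ) (nhds c2) :=
    hasDerivAt_iff_tendsto_slope.1 hg'
  have hev : ∀ᶠ w in nhdsWithin v (Set.Ioi v), slope g' v w < 0 := by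
    refine ((hslope.eventually_lt_const h2).filter_mono ?_)
    exact nhdsWithin_mono v (fun x hx => ne_of_gt hx)
  obtain ⟨u, hu, hsub⟩ := mem_nhdsGT_iff_exists_Ioo_subset.1 hev
  -- local min neighborhood
  obtain ⟨ε, hε, hball⟩ := Metric.eventually_nhds_iff.1 hmin
  set c := v + min (min (u - v) δ) ε / 2 with hc
  have hpos : 0 < min (min (u - v) δ) ε := by
    have : 0 < u - v := sub_pos.2 hu
    positivity
  have hvc : v < c := by rw [hc]; linarith
  have hcu : c < u := by
    have h1 : min (min (u - v) δ) ε ≤ u - v := le_trans (min_le_left _ _) (min_le_left _ _)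
    simp only [hc]; linarith
  have hcδ : c < v + δ := by
    have h1 : min (min (u - v) δ) ε ≤ δ := le_trans (min_le_left _ _) (min_le_right _ _)
    simp only [hc]; linarith
  have hcε : |c - v| < ε := by
    have h1 : min (min (u - v) δ) ε ≤ ε := min_le_right _ _
    rw [abs_of_pos (by linarith)]
    simp only [hc]; linarith
  -- g' negative on Ioo v c
  have hneg : ∀ x ∈ Set.Ioo v c, g' x < 0 := by
    intro x hx
    have hxu : x ∈ Set.Ioo v u := ⟨hx.1, lt_trans hx.2 hcu⟩
    have hslt : slope g' v x < 0 := hsub hxu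
    have hs : slope g' v x = g' x / (x - v) := by
      simp [slope_def_field, h0]
    rw [hs] at hslt
    have hxv : 0 < x - v := sub_pos.2 hx.1
    exact (div_neg_iff.1 hslt).resolve_left (fun h => absurd hxv (not_lt.2 h.2.le)) |>.1
  -- g strictly anti on Icc v c
  have hIcc : Set.Icc v c ⊆ Set.Ioo (v - δ) (v + δ) := by
    intro x hx
    exact ⟨by linarith [hx.1], by linarith [hx.2]⟩
  have hanti : StrictAntiOn g (Set.Icc v c) := by
    apply strictAntiOn_of_deriv_neg (convex_Icc v c)
    · intro x hx
      exact ((hg x (hIcc hx)).continuousAt).continuousWithinAt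
    · intro x hx
      rw [interior_Icc] at hx
      rw [(hg x (hIcc (Set.Ioo_subset_Icc_self hx))).deriv]
      exact hneg x hx
  have hlt : g c < g v :=
    hanti (Set.left_mem_Icc.2 hvc.le) (Set.right_mem_Icc.2 hvc.le) hvc
  have := hball (y := c) (by rwa [Real.dist_eq])
  exact absurd this (not_le.2 hlt)

/-- `t = r₁ - r₂` has no degenerate critical points in `(0, α₁)`:
at a critical point, `t > 0` forces `t'' < 0` and `t < 0` forces `t'' > 0`; in particular
`t` has no positive local minimum and no negative local maximum in `(0, α₁)`. -/
theorem stmt12 (N : ℕ) (m b : ℝ) (f : ℝ → ℝ) (hm : 1 < m)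
    (hN2 : 2 ≤ N) (hNm : (N : ℝ) ≤ m) (hf : H1cond b f)
    (R₁ R₂ : EReal) (u₁ u₁' u₂ u₂' r₁ r₁' r₁'' r₂ r₂' r₂'' : ℝ → ℝ)
    (h₁ : IsRadialSolution N m f R₁ u₁ u₁')
    (h₂ : IsRadialSolution N m f R₂ u₂ u₂')
    (hb : b < u₁ 0) (h12 : u₁ 0 < u₂ 0)
    (hi₁ : IsInvSol N m (u₁ 0) f R₁ u₁ r₁ r₁' r₁'')
    (hi₂ : IsInvSol N m (u₂ 0) f R₂ u₂ r₂ r₂' r₂'') :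
    (∀ v ∈ Set.Ioo (0 : ℝ) (u₁ 0),
      (r₁' v = r₂' v → 0 < r₁ v - r₂ v → r₁'' v - r₂'' v < 0) ∧
      (r₁' v = r₂' v → r₁ v - r₂ v < 0 → 0 < r₁'' v - r₂'' v)) ∧
    (¬ ∃ v ∈ Set.Ioo (0 : ℝ) (u₁ 0),
      0 < r₁ v - r₂ v ∧ IsLocalMin (fun w => r₁ w - r₂ w) v) ∧
    (¬ ∃ v ∈ Set.Ioo (0 : ℝ) (u₁ 0),
      r₁ v - r₂ v < 0 ∧ IsLocalMax (fun w => r₁ w - r₂ w) v) := by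
  have hm1 : (0:ℝ) < m - 1 := by linarith
  have hN1 : (1:ℝ) ≤ (N:ℝ) - 1 := by
    have h2N : (2:ℝ) ≤ (N:ℝ) := by exact_mod_cast hN2
    linarith
  have part1 : ∀ v ∈ Set.Ioo (0:ℝ) (u₁ 0),
      (r₁' v = r₂' v → 0 < r₁ v - r₂ v → r₁'' v - r₂'' v < 0) ∧
      (r₁' v = r₂' v → r₁ v - r₂ v < 0 → 0 < r₁'' v - r₂'' v) := by
    intro v hv
    have hv2 : v ∈ Set.Ioo (0:ℝ) (u₂ 0) := ⟨hv.1, hv.2.trans h12⟩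
    obtain ⟨hr1pos, -, -, hd1, hr1neg, hd1', ho1⟩ := hi₁.1 v hv
    obtain ⟨hr2pos, -, -, hd2, hr2neg, hd2', ho2⟩ := hi₂.1 v hv2
    have hA : 0 < ((N:ℝ) - 1) * (r₁' v) ^ 2 := by nlinarith [hr1neg]
    constructor
    · intro hp ht
      rw [← hp] at ho2
      have hlt : ((N:ℝ) - 1) * (r₁' v) ^ 2 / r₁ v < ((N:ℝ) - 1) * (r₁' v) ^ 2 / r₂ v :=
        div_lt_div_of_pos_left hA hr2pos (by linarith)
      have hkey : (m - 1) * r₁'' v - (m - 1) * r₂'' v < 0 := by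
        rw [ho1, ho2]; linarith
      nlinarith [hkey, hm1]
    · intro hp ht
      rw [← hp] at ho2
      have hlt : ((N:ℝ) - 1) * (r₁' v) ^ 2 / r₂ v < ((N:ℝ) - 1) * (r₁' v) ^ 2 / r₁ v :=
        div_lt_div_of_pos_left hA hr1pos (by linarith)
      have hkey : 0 < (m - 1) * r₁'' v - (m - 1) * r₂'' v := by
        rw [ho1, ho2]; linarith
      nlinarith [hkey, hm1]
  refine ⟨part1, ?_, ?_⟩
  · rintro ⟨v, hv, ht, hmin⟩
    obtain ⟨-, -, -, hd1, -, hd1', -⟩ := hi₁.1 v hv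
    obtain ⟨-, -, -, hd2, -, hd2', -⟩ := hi₂.1 v ⟨hv.1, hv.2.trans h12⟩
    have h0 : r₁' v - r₂' v = 0 := hmin.hasDerivAt_eq_zero (hd1.sub hd2)
    have h2 := (part1 v hv).1 (by linarith) ht
    have hδ : 0 < min v (u₁ 0 - v) := lt_min hv.1 (sub_pos.2 hv.2)
    refine noMinAux (fun w => r₁ w - r₂ w) (fun w => r₁' w - r₂' w) v _ _ hδ ?_ ?_ h0 h2 hmin
    · intro w hw
      have hw' : w ∈ Set.Ioo (0:ℝ) (u₁ 0) := by
        constructor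
        · have h1 : min v (u₁ 0 - v) ≤ v := min_le_left _ _
          have := hw.1; linarith
        · have h1 : min v (u₁ 0 - v) ≤ u₁ 0 - v := min_le_right _ _
          have := hw.2; linarith
      obtain ⟨-, -, -, hdw1, -, -, -⟩ := hi₁.1 w hw'
      obtain ⟨-, -, -, hdw2, -, -, -⟩ := hi₂.1 w ⟨hw'.1, hw'.2.trans h12⟩
      exact hdw1.sub hdw2
    · exact hd1'.sub hd2'
  · rintro ⟨v, hv, ht, hmax⟩
    obtain ⟨-, -, -, hd1, -, hd1', -⟩ := hi₁.1 v hv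
    obtain ⟨-, -, -, hd2, -, hd2', -⟩ := hi₂.1 v ⟨hv.1, hv.2.trans h12⟩
    have h0 : r₁' v - r₂' v = 0 := hmax.hasDerivAt_eq_zero (hd1.sub hd2)
    have h2 := (part1 v hv).2 (by linarith) ht
    have hmin' : IsLocalMin (fun w => r₂ w - r₁ w) v := by
      simpa [neg_sub] using hmax.neg
    have h0' : r₂' v - r₁' v = 0 := by linarith
    have h2' : r₂'' v - r₁'' v < 0 := by linarith
    have hδ : 0 < min v (u₁ 0 - v) := lt_min hv.1 (sub_pos.2 hv.2)
    refine noMinAux (fun w => r₂ w - r₁ w) (fun w => r₂' w - r₁' w) v _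
      (r₂'' v - r₁'' v) hδ ?_ ?_ h0' h2' hmin'
    · intro w hw
      have hw' : w ∈ Set.Ioo (0:ℝ) (u₁ 0) := by
        constructor
        · have h1 : min v (u₁ 0 - v) ≤ v := min_le_left _ _
          have := hw.1; linarith
        · have h1 : min v (u₁ 0 - v) ≤ u₁ 0 - v := min_le_right _ _
          have := hw.2; linarith
      obtain ⟨-, -, -, hdw1, -, -, -⟩ := hi₁.1 w hw'
      obtain ⟨-, -, -, hdw2, -, -, -⟩ := hi₂.1 w ⟨hw'.1, hw'.2.trans h12⟩
      exact hdw2.sub hdw1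
    · exact hd2'.sub hd1'


end
end

section
/- Let m > 1 and 2 ≤ N ≤ m, and assume (H1). Let u₁, u₂ be two radial solutions with b < α₁ < α₂, and on (0,α₁) set ω_i(u) = r_i(u)^{N−1}/(r_i'(u)|r_i'(u)|^{m−2}) and S(u) = ω₁(u)/ω₂(u). Then for all u ∈ (0,α₁): S'(u) = (r₁(u)/r₂(u))^{N−1} (r₂'(u)/r₁'(u))^{m−1} f(u) ( |r₂'(u)|^m − |r₁'(u)|^m ). -/
open Filter Set MeasureTheory intervalIntegral

noncomputable section

/-!
Writing `p = -r' > 0`, one has `ω = -r^{N-1} p^{1-m}`, and the inverse ODE collapses the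
derivative to `ω' = f(u) r^{N-1} p`: the `(N-1) r'²/r` term of the ODE cancels the derivative
of `r^{N-1}`. The quotient rule for `ω₁/ω₂` then gives the formula once `(p₂/p₁)^{m-1}` and
`p^m` are rewritten through `p^{1-m}`.
-/

lemma omegaF_eq_of_neg (N : ℕ) (m : ℝ) (rr rr' : ℝ → ℝ) (w : ℝ) (hneg : rr' w < 0) :
    omegaF N m rr rr' w = -(rr w ^ (N - 1) * (-rr' w) ^ (1 - m)) := by
  have hp : 0 < -rr' w := neg_pos.mpr hneg
  have hden : rr' w * |rr' w| ^ (m - 2) = -(-rr' w) ^ (m - 1) := by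
    rw [abs_of_neg hneg, show m - 1 = 1 + (m - 2) by ring, Real.rpow_add hp, Real.rpow_one]
    ring
  rw [omegaF, hden, show 1 - m = -(m - 1) by ring, Real.rpow_neg hp.le, div_neg,
    div_eq_mul_inv]

lemma omegaF_neg (N : ℕ) (m : ℝ) (rr rr' : ℝ → ℝ) (w : ℝ) (hr : 0 < rr w)
    (hneg : rr' w < 0) : omegaF N m rr rr' w < 0 :=
  div_neg_of_pos_of_neg (pow_pos hr _)
    (mul_neg_of_neg_of_pos hneg (Real.rpow_pos_of_pos (abs_pos.mpr hneg.ne) _))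

lemma hasDerivAt_omegaF (N : ℕ) (m : ℝ) (f rr rr' rr'' : ℝ → ℝ) (v : ℝ) (hN : 1 ≤ N)
    (hr : rr v ≠ 0) (hd : HasDerivAt rr (rr' v) v)
    (hd' : HasDerivAt rr' (rr'' v) v) (hneg : rr' v < 0)
    (hode : (m - 1) * rr'' v = ((N : ℝ) - 1) * rr' v ^ 2 / rr v + f v * |rr' v| ^ m * rr' v) :
    HasDerivAt (omegaF N m rr rr') (f v * rr v ^ (N - 1) * (-rr' v)) v := by
  have hp : 0 < -rr' v := neg_pos.mpr hneg
  have hω : omegaF N m rr rr' =ᶠ[nhds v] fun w => -(rr w ^ (N - 1) * (-rr' w) ^ (1 - m)) := by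
    filter_upwards [hd'.continuousAt.preimage_mem_nhds (Iio_mem_nhds hneg)] with w hw
    exact omegaF_eq_of_neg N m rr rr' w hw
  refine (((hd.pow (N - 1)).mul (hd'.neg.rpow_const (Or.inl hp.ne'))).neg.congr_of_eventuallyEq
    hω).congr_deriv ?_
  -- also for `N = 1`, where `N - 1 - 1` truncates to `0`
  have hpow : ((N - 1 : ℕ) : ℝ) * rr v ^ (N - 1 - 1) * rr v = ((N : ℝ) - 1) * rr v ^ (N - 1) := by
    obtain ⟨k, rfl⟩ : ∃ k, N = k + 1 := ⟨N - 1, by omega⟩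
    cases k with
    | zero => simp
    | succ k => push_cast; ring
  have hpm : (-rr' v) ^ (1 - m) = (-rr' v) ^ (1 - m - 1) * (-rr' v) := by
    rw [← Real.rpow_add_one hp.ne', sub_add_cancel]
  have hmq : (-rr' v) ^ m * (-rr' v) ^ (1 - m - 1) = 1 := by
    rw [← Real.rpow_add hp, show m + (1 - m - 1) = 0 by ring, Real.rpow_zero]
  rw [abs_of_neg hneg] at hode
  simp only [Pi.neg_apply, Pi.pow_apply]
  rw [eq_div_of_mul_eq hr hpow, hpm]
  linear_combination (-(rr v ^ (N - 1) * (-rr' v) ^ (1 - m - 1))) * hode +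
    (f v * rr v ^ (N - 1) * (-rr' v)) * hmq

lemma quotient_rule_omega_eq (a₁ a₂ p₁ p₂ m c : ℝ) (ha₂ : a₂ ≠ 0) (hp₁ : 0 < p₁)
    (hp₂ : 0 < p₂) :
    (c * a₁ * p₁ * -(a₂ * p₂ ^ (1 - m)) - -(a₁ * p₁ ^ (1 - m)) * (c * a₂ * p₂)) /
        (-(a₂ * p₂ ^ (1 - m))) ^ 2 =
      a₁ / a₂ * (p₂ / p₁) ^ (m - 1) * c * (p₂ ^ m - p₁ ^ m) := by
  have hinv : ∀ p : ℝ, 0 < p → p ^ (m - 1) = (p ^ (1 - m))⁻¹ := fun p hp => by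
    rw [← Real.rpow_neg hp.le, neg_sub]
  have hpow : ∀ p : ℝ, 0 < p → p ^ m = p * p ^ (m - 1) := fun p hp => by
    rw [Real.rpow_sub_one hp.ne']; field_simp
  have hq₁ := (Real.rpow_pos_of_pos hp₁ (1 - m)).ne'
  have hq₂ := (Real.rpow_pos_of_pos hp₂ (1 - m)).ne'
  rw [Real.div_rpow hp₂.le hp₁.le, hpow p₁ hp₁, hpow p₂ hp₂, hinv p₁ hp₁, hinv p₂ hp₂]
  field_simp
  ring

theorem stmt13_general (N : ℕ) (m : ℝ) (f : ℝ → ℝ)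
    (hN2 : 2 ≤ N)
    (R₁ R₂ : EReal) (u₁ u₂ r₁ r₁' r₁'' r₂ r₂' r₂'' : ℝ → ℝ)
    (h12 : u₁ 0 < u₂ 0)
    (hi₁ : IsInvSol N m (u₁ 0) f R₁ u₁ r₁ r₁' r₁'')
    (hi₂ : IsInvSol N m (u₂ 0) f R₂ u₂ r₂ r₂' r₂'') :
    ∀ v ∈ Set.Ioo (0 : ℝ) (u₁ 0),
      HasDerivAt (fun w => omegaF N m r₁ r₁' w / omegaF N m r₂ r₂' w)
        ((r₁ v / r₂ v) ^ (N - 1) * (r₂' v / r₁' v) ^ (m - 1) * f v *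
          (|r₂' v| ^ m - |r₁' v| ^ m)) v := by
  rintro v ⟨hv0, hv1⟩
  obtain ⟨hr₁, -, -, hd₁, hneg₁, hd₁', hode₁⟩ := hi₁.1 v ⟨hv0, hv1⟩
  obtain ⟨hr₂, -, -, hd₂, hneg₂, hd₂', hode₂⟩ := hi₂.1 v ⟨hv0, hv1.trans h12⟩
  have hN : 1 ≤ N := by omega
  refine ((hasDerivAt_omegaF N m f r₁ r₁' r₁'' v hN hr₁.ne' hd₁ hd₁' hneg₁ hode₁).div
    (hasDerivAt_omegaF N m f r₂ r₂' r₂'' v hN hr₂.ne' hd₂ hd₂' hneg₂ hode₂)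
    (omegaF_neg N m r₂ r₂' v hr₂ hneg₂).ne).congr_deriv ?_
  rw [omegaF_eq_of_neg N m r₁ r₁' v hneg₁, omegaF_eq_of_neg N m r₂ r₂' v hneg₂,
    abs_of_neg hneg₁, abs_of_neg hneg₂, div_pow, ← neg_div_neg_eq (r₂' v)]
  exact quotient_rule_omega_eq _ _ _ _ m (f v) (pow_ne_zero _ hr₂.ne') (neg_pos.mpr hneg₁)
    (neg_pos.mpr hneg₂)

/-- the quotient `S = ω₁/ω₂` satisfies, on `(0, α₁)`,
`S'(u) = (r₁/r₂)^{N-1} (r₂'/r₁')^{m-1} f(u) (|r₂'|^m - |r₁'|^m)`. -/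
theorem stmt13 (N : ℕ) (m b : ℝ) (f : ℝ → ℝ) (hm : 1 < m)
    (hN2 : 2 ≤ N) (hNm : (N : ℝ) ≤ m) (hf : H1cond b f)
    (R₁ R₂ : EReal) (u₁ u₁' u₂ u₂' r₁ r₁' r₁'' r₂ r₂' r₂'' : ℝ → ℝ)
    (h₁ : IsRadialSolution N m f R₁ u₁ u₁')
    (h₂ : IsRadialSolution N m f R₂ u₂ u₂')
    (hb : b < u₁ 0) (h12 : u₁ 0 < u₂ 0)
    (hi₁ : IsInvSol N m (u₁ 0) f R₁ u₁ r₁ r₁' r₁'')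
    (hi₂ : IsInvSol N m (u₂ 0) f R₂ u₂ r₂ r₂' r₂'') :
    ∀ v ∈ Set.Ioo (0 : ℝ) (u₁ 0),
      HasDerivAt (fun w => omegaF N m r₁ r₁' w / omegaF N m r₂ r₂' w)
        ((r₁ v / r₂ v) ^ (N - 1) * (r₂' v / r₁' v) ^ (m - 1) * f v *
          (|r₂' v| ^ m - |r₁' v| ^ m)) v :=
  stmt13_general N m f hN2 R₁ R₂ u₁ u₂ r₁ r₁' r₁'' r₂ r₂' r₂'' h12 hi₁ hi₂

end
end
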